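/- arXiv:1805.08539 — 2 statements merged into one kernel-verified Lean document; each statement's English description precedes it below -/
import Mathlib

section
/- For every ε, δ ∈ (0,1) and every positive integer m with m ≥ 2/(ε²δ), it holds that ν(m,ε,δ) = 1; that is, for every positive integer n and every x ∈ ℝⁿ, feature hashing satisfies Pr[ | ‖Ax‖₂² − ‖x‖₂² | < ε‖x‖₂² ] ≥ 1 − δ. -/
open scoped BigOperators Classical
noncomputable section

namespace FH

def hashSq (n m : ℕ) (h : Fin n → Fin m) (σ : Fin n → Bool) (x : Fin n → ℝ) : ℝ :=
  ∑ i : Fin m, (∑ j : Fin n, (if h j = i then (if σ j then (1:ℝ) else -1) * x j else 0)) ^ 2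

def hashPr (n m : ℕ) (P : (Fin n → Fin m) → (Fin n → Bool) → Prop) : ℝ :=
  ((Finset.univ.filter (fun p : (Fin n → Fin m) × (Fin n → Bool) => P p.1 p.2)).card : ℝ) /
    (Fintype.card ((Fin n → Fin m) × (Fin n → Bool)) : ℝ)

def l2 (n : ℕ) (x : Fin n → ℝ) : ℝ := Real.sqrt (∑ j, x j ^ 2)

def linf (n : ℕ) (x : Fin n → ℝ) : ℝ := ⨆ j, |x j|

def goodPr (n m : ℕ) (ε : ℝ) (x : Fin n → ℝ) : ℝ :=
  hashPr n m (fun h σ => |hashSq n m h σ x - l2 n x ^ 2| < ε * l2 n x ^ 2)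

def nuSet (m : ℕ) (ε δ : ℝ) : Set ℝ :=
  {ν | ν ∈ Set.Icc (0:ℝ) 1 ∧ ∀ n : ℕ, 0 < n → ∀ x : Fin n → ℝ, x ≠ 0 →
    linf n x ≤ ν * l2 n x → 1 - δ ≤ goodPr n m ε x}

def nu (m : ℕ) (ε δ : ℝ) : ℝ := sSup (nuSet m ε δ)

def lg (x : ℝ) : ℝ := Real.logb 2 x

/-! Writing `s_j = ±1` for the signs, `‖Ax‖² - ‖x‖²` is the chaos
`D = ∑_{j ≠ k} [h j = h k] s_j s_k x_j x_k`. Averaging over the signs, `s_j s_k s_j' s_k'` has mean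
zero unless `{j', k'} = {j, k}`, and `[h j = h k]` has mean `1/m`; hence
`𝔼 D² = (2/m) ∑_{j ≠ k} x_j² x_k² ≤ 2‖x‖⁴/m`. Chebyshev's inequality bounds the probability that
`|D| ≥ ε‖x‖²` by `2/(ε²m) ≤ δ`, for every `x`, so no condition on `‖x‖_∞` is needed and `ν = 1`. -/

open Finset

lemma sum_eq_zero_of_perm_neg {α R : Type*} [Fintype α] [NonAssocRing R] [NoZeroDivisors R]
    [CharZero R] (e : Equiv.Perm α) {f : α → R} (hf : ∀ a, f (e a) = -f a) :
    ∑ a, f a = 0 := by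
  have h := Equiv.sum_comp e f
  rw [sum_congr rfl fun a _ ↦ hf a, sum_neg_distrib] at h
  exact CharZero.neg_eq_self_iff.mp h

lemma card_le_abs_mul_sq_le_sum_sq {α : Type*} [Fintype α] (f : α → ℝ) {t : ℝ} (ht : 0 ≤ t) :
    (#{a | t ≤ |f a|} : ℝ) * t ^ 2 ≤ ∑ a, f a ^ 2 :=
  calc (#{a | t ≤ |f a|} : ℝ) * t ^ 2 = ∑ a ∈ {a | t ≤ |f a|}, t ^ 2 := by
        rw [sum_const, nsmul_eq_mul]
    _ ≤ ∑ a ∈ {a | t ≤ |f a|}, f a ^ 2 := sum_le_sum fun a ha ↦ by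
        simpa [sq_abs] using pow_le_pow_left₀ ht (mem_filter.1 ha).2 2
    _ ≤ ∑ a, f a ^ 2 := sum_le_sum_of_subset_of_nonneg (subset_univ _) fun _ _ _ ↦ sq_nonneg _

section Signs

variable {ι : Type*}

def boolSign (b : Bool) : ℝ := if b then 1 else -1

lemma boolSign_mul_self (b : Bool) : boolSign b * boolSign b = 1 := by
  cases b <;> norm_num [boolSign]

lemma boolSign_not (b : Bool) : boolSign (!b) = -boolSign b := by
  cases b <;> simp [boolSign]

def pairSign (σ : ι → Bool) (p : ι × ι) : ℝ := boolSign (σ p.1) * boolSign (σ p.2)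

lemma pairSign_swap (σ : ι → Bool) (p : ι × ι) : pairSign σ p.swap = pairSign σ p :=
  mul_comm _ _

lemma pairSign_mul_self (σ : ι → Bool) (p : ι × ι) : pairSign σ p * pairSign σ p = 1 := by
  rw [pairSign, mul_mul_mul_comm, boolSign_mul_self, boolSign_mul_self, one_mul]

variable [DecidableEq ι]

def flipAt (t : ι) : Equiv.Perm (ι → Bool) :=
  Function.Involutive.toPerm (fun σ ↦ Function.update σ t (!σ t)) fun σ ↦ by
    ext l; by_cases hl : l = t <;> simp [hl]

@[simp]
lemma flipAt_apply (t : ι) (σ : ι → Bool) : flipAt t σ = Function.update σ t (!σ t) := rfl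

lemma pairSign_flipAt (t : ι) (σ : ι → Bool) {p : ι × ι} (hp : p.1 ≠ p.2) :
    pairSign (flipAt t σ) p = (if t = p.1 ∨ t = p.2 then -1 else 1) * pairSign σ p := by
  have hsign : ∀ l, boolSign (flipAt t σ l) = (if l = t then -1 else 1) * boolSign (σ l) := by
    intro l
    by_cases hl : l = t
    · subst hl; simp [boolSign_not]
    · simp [hl]
  rw [pairSign, hsign, hsign, pairSign]
  grind

lemma sum_pairSign_mul_pairSign [Fintype ι] {p q : ι × ι} (hp : p.1 ≠ p.2) (hq : q.1 ≠ q.2) :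
    ∑ σ : ι → Bool, pairSign σ p * pairSign σ q =
      if q = p ∨ q = p.swap then 2 ^ Fintype.card ι else 0 := by
  split_ifs with hqp
  · have : ∀ σ, pairSign σ p * pairSign σ q = 1 := by
      rcases hqp with rfl | rfl <;> simp [pairSign_swap, pairSign_mul_self]
    simp [this]
  · -- flipping a coordinate that occurs in exactly one of `p`, `q` negates the summand
    obtain ⟨t, ht⟩ : ∃ t, ¬((t = p.1 ∨ t = p.2) ↔ (t = q.1 ∨ t = q.2)) := by
      by_cases h : p.1 = q.1 ∨ p.1 = q.2
      · exact ⟨p.2, by grind⟩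
      · exact ⟨p.1, by simpa using h⟩
    refine sum_eq_zero_of_perm_neg (flipAt t) fun σ ↦ ?_
    rw [pairSign_flipAt t σ hp, pairSign_flipAt t σ hq]
    split_ifs with h₁ h₂ h₂
    · exact absurd (iff_of_true h₁ h₂) ht
    · ring
    · ring
    · exact absurd (iff_of_false h₁ h₂) ht

lemma sum_sq_sum_offDiag_mul_pairSign [Fintype ι] (a : ι × ι → ℝ) (ha : ∀ p, a p.swap = a p) :
    ∑ σ : ι → Bool, (∑ p ∈ univ.offDiag, a p * pairSign σ p) ^ 2 =
      2 * 2 ^ Fintype.card ι * ∑ p ∈ univ.offDiag, a p ^ 2 := by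
  have hpair : ∀ p ∈ (univ : Finset ι).offDiag,
      ∑ q ∈ univ.offDiag, a p * a q * ∑ σ : ι → Bool, pairSign σ p * pairSign σ q =
        2 * 2 ^ Fintype.card ι * a p ^ 2 := by
    intro p hp
    have hp' : p.1 ≠ p.2 := (mem_offDiag.1 hp).2.2
    have hswap : p.swap ∈ (univ : Finset ι).offDiag := by simpa using hp'.symm
    have hne : p.swap ≠ p := fun h ↦ hp' (congrArg Prod.snd h)
    rw [Finset.sum_congr rfl fun q hq ↦ by
      rw [sum_pairSign_mul_pairSign hp' (mem_offDiag.1 hq).2.2]]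
    simp only [mul_ite, mul_zero]
    rw [← sum_filter]
    have : ({q ∈ univ.offDiag | q = p ∨ q = p.swap} : Finset (ι × ι)) = {p, p.swap} := by
      ext q
      simp only [mem_filter, mem_insert, mem_singleton]
      grind
    rw [this, sum_pair hne.symm, ha]
    ring
  calc ∑ σ : ι → Bool, (∑ p ∈ univ.offDiag, a p * pairSign σ p) ^ 2
      = ∑ p ∈ univ.offDiag, ∑ q ∈ univ.offDiag,
          a p * a q * ∑ σ : ι → Bool, pairSign σ p * pairSign σ q := by
        simp_rw [sq, Finset.sum_mul_sum, mul_sum]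
        rw [sum_comm]
        refine sum_congr rfl fun p _ ↦ ?_
        rw [sum_comm]
        refine sum_congr rfl fun q _ ↦ sum_congr rfl fun σ _ ↦ by ring
    _ = 2 * 2 ^ Fintype.card ι * ∑ p ∈ univ.offDiag, a p ^ 2 := by
        rw [sum_congr rfl hpair, mul_sum]

end Signs

section Collisions

variable {ι κ : Type*} [DecidableEq κ]

def collide (h : ι → κ) (p : ι × ι) : ℝ := if h p.1 = h p.2 then 1 else 0

lemma collide_swap (h : ι → κ) (p : ι × ι) : collide h p.swap = collide h p := by
  simp [collide, eq_comm]

lemma collide_sq (h : ι → κ) (p : ι × ι) : collide h p ^ 2 = collide h p := by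
  unfold collide; split_ifs <;> norm_num

lemma sum_collide [Fintype ι] [DecidableEq ι] [Fintype κ] {p : ι × ι} (hp : p.1 ≠ p.2) :
    ∑ h : ι → κ, collide h p = (Fintype.card κ : ℝ) ^ (Fintype.card ι - 1) := by
  -- given the values off `p.2`, exactly one value at `p.2` collides with the value at `p.1`
  rw [← (Equiv.funSplitAt p.2 κ).symm.sum_comp, Fintype.sum_prod_type_right]
  have hone : ∀ g : {l // l ≠ p.2} → κ,
      ∑ a : κ, collide ((Equiv.funSplitAt p.2 κ).symm (a, g)) p = 1 := by
    intro g
    simp [collide, Equiv.funSplitAt, Equiv.piSplitAt, hp]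
  simp [hone, Fintype.card_subtype_compl]

end Collisions

section Distortion

variable {ι κ : Type*} [Fintype ι] [DecidableEq κ]

def distortion (h : ι → κ) (σ : ι → Bool) (x : ι → ℝ) : ℝ :=
  ∑ p ∈ univ.offDiag, collide h p * (x p.1 * x p.2) * pairSign σ p

lemma sum_offDiag_sq_le (x : ι → ℝ) :
    ∑ p ∈ univ.offDiag, (x p.1 * x p.2) ^ 2 ≤ (∑ j, x j ^ 2) ^ 2 :=
  calc ∑ p ∈ univ.offDiag, (x p.1 * x p.2) ^ 2
      ≤ ∑ p : ι × ι, (x p.1 * x p.2) ^ 2 :=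
        sum_le_sum_of_subset_of_nonneg (subset_univ _) fun _ _ _ ↦ sq_nonneg _
    _ = (∑ j, x j ^ 2) ^ 2 := by
        rw [sq (∑ j, x j ^ 2), Finset.sum_mul_sum, ← univ_product_univ, sum_product]
        simp_rw [mul_pow]

variable [DecidableEq ι] [Fintype κ]

lemma sum_distortion_sq (x : ι → ℝ) :
    ∑ hσ : (ι → κ) × (ι → Bool), distortion hσ.1 hσ.2 x ^ 2 =
      2 * 2 ^ Fintype.card ι * (Fintype.card κ : ℝ) ^ (Fintype.card ι - 1) *
        ∑ p ∈ univ.offDiag, (x p.1 * x p.2) ^ 2 := by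
  have hsymm : ∀ (h : ι → κ) (p : ι × ι),
      collide h p.swap * (x p.swap.1 * x p.swap.2) = collide h p * (x p.1 * x p.2) := by
    intro h p; rw [collide_swap, Prod.fst_swap, Prod.snd_swap, mul_comm (x p.2)]
  calc ∑ hσ : (ι → κ) × (ι → Bool), distortion hσ.1 hσ.2 x ^ 2
      = ∑ h : ι → κ, 2 * 2 ^ Fintype.card ι *
          ∑ p ∈ univ.offDiag, collide h p * (x p.1 * x p.2) ^ 2 := by
        rw [Fintype.sum_prod_type]
        refine sum_congr rfl fun h _ ↦ ?_
        simp only [distortion]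
        rw [sum_sq_sum_offDiag_mul_pairSign (fun p ↦ collide h p * (x p.1 * x p.2)) (hsymm h)]
        simp_rw [mul_pow, collide_sq]
    _ = _ := by
        rw [← mul_sum, sum_comm, mul_sum, mul_sum]
        refine sum_congr rfl fun p hp ↦ ?_
        rw [← sum_mul, sum_collide (mem_offDiag.1 hp).2.2]
        ring

lemma card_le_abs_distortion_mul_sq_le (x : ι → ℝ) {t : ℝ} (ht : 0 ≤ t) :
    (#{hσ : (ι → κ) × (ι → Bool) | t ≤ |distortion hσ.1 hσ.2 x|} : ℝ) * t ^ 2 ≤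
      2 * 2 ^ Fintype.card ι * (Fintype.card κ : ℝ) ^ (Fintype.card ι - 1) *
        (∑ j, x j ^ 2) ^ 2 :=
  calc _ ≤ ∑ hσ : (ι → κ) × (ι → Bool), distortion hσ.1 hσ.2 x ^ 2 :=
        card_le_abs_mul_sq_le_sum_sq _ ht
    _ = _ := sum_distortion_sq x
    _ ≤ _ := by gcongr; exact sum_offDiag_sq_le x

end Distortion

lemma hashSq_eq_sum_sq_add_distortion {n m : ℕ} (h : Fin n → Fin m) (σ : Fin n → Bool)
    (x : Fin n → ℝ) : hashSq n m h σ x = ∑ j, x j ^ 2 + distortion h σ x := by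
  have hexpand : hashSq n m h σ x =
      ∑ p ∈ univ ×ˢ univ, collide h p * (x p.1 * x p.2) * pairSign σ p := by
    rw [sum_product]
    unfold hashSq
    simp_rw [sq, Finset.sum_mul_sum]
    rw [sum_comm]
    refine sum_congr rfl fun j _ ↦ ?_
    rw [sum_comm]
    refine sum_congr rfl fun k _ ↦ ?_
    change ∑ i, (if h j = i then boolSign (σ j) * x j else 0) *
      (if h k = i then boolSign (σ k) * x k else 0) = _
    rw [Fintype.sum_eq_single (h j) fun i hi ↦ by simp [Ne.symm hi]]
    simp only [if_true, collide, pairSign, eq_comm]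
    split_ifs <;> ring
  rw [hexpand, ← diag_union_offDiag, sum_union (disjoint_diag_offDiag _), sum_diag]
  simp [collide, pairSign, boolSign_mul_self, distortion, sq]

lemma l2_sq (n : ℕ) (x : Fin n → ℝ) : l2 n x ^ 2 = ∑ j, x j ^ 2 :=
  Real.sq_sqrt (sum_nonneg fun _ _ ↦ sq_nonneg _)

lemma one_sub_le_goodPr_of_card_le {n m : ℕ} {ε δ : ℝ} {x : Fin n → ℝ}
    (hN : 0 < Fintype.card ((Fin n → Fin m) × (Fin n → Bool)))
    (hbad : (#{hσ : (Fin n → Fin m) × (Fin n → Bool) |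
        ¬|hashSq n m hσ.1 hσ.2 x - l2 n x ^ 2| < ε * l2 n x ^ 2} : ℝ) ≤
      δ * Fintype.card ((Fin n → Fin m) × (Fin n → Bool))) :
    1 - δ ≤ goodPr n m ε x := by
  have hsplit := card_filter_add_card_filter_not (s := univ)
    fun hσ : (Fin n → Fin m) × (Fin n → Bool) ↦
      |hashSq n m hσ.1 hσ.2 x - l2 n x ^ 2| < ε * l2 n x ^ 2
  rw [card_univ] at hsplit
  rify at hsplit
  rw [goodPr, hashPr, le_div_iff₀ (by exact_mod_cast hN)]
  linarith

lemma one_sub_le_goodPr {n m : ℕ} (hn : 0 < n) {ε δ : ℝ} (hε : 0 < ε) (hδ : 0 < δ)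
    (hm : 2 / (ε ^ 2 * δ) ≤ m) {x : Fin n → ℝ} (hx : x ≠ 0) : 1 - δ ≤ goodPr n m ε x := by
  set S := ∑ j, x j ^ 2
  have hS : 0 < S := by
    obtain ⟨j, hj⟩ := Function.ne_iff.1 hx
    exact sum_pos' (fun _ _ ↦ sq_nonneg _) ⟨j, mem_univ j, sq_pos_of_ne_zero hj⟩
  have hmε : 2 ≤ m * (ε ^ 2 * δ) := (div_le_iff₀ (by positivity)).1 hm
  have hm0 : (0 : ℝ) < m := (div_pos two_pos (by positivity)).trans_le hm
  have hN : (Fintype.card ((Fin n → Fin m) × (Fin n → Bool)) : ℝ) =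
      m ^ (n - 1) * m * 2 ^ n := by
    simp only [Fintype.card_prod, Fintype.card_fun, Fintype.card_fin, Fintype.card_bool]
    rw [← pow_succ, Nat.sub_add_cancel hn]
    push_cast; ring
  have hNpos : (0 : ℝ) < Fintype.card ((Fin n → Fin m) × (Fin n → Bool)) := by
    rw [hN]; exact mul_pos (mul_pos (pow_pos hm0 _) hm0) (by positivity)
  refine one_sub_le_goodPr_of_card_le (by exact_mod_cast hNpos) ?_
  have hchaos := card_le_abs_distortion_mul_sq_le (κ := Fin m) x (t := ε * S) (by positivity)
  simp only [Fintype.card_fin] at hchaos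
  simp only [hashSq_eq_sum_sq_add_distortion, l2_sq, add_sub_cancel_left, not_lt]
  refine le_of_mul_le_mul_right ?_ (by positivity : 0 < (ε * S) ^ 2)
  calc _ ≤ 2 * (2 ^ n * (m : ℝ) ^ (n - 1) * S ^ 2) := by linarith
    _ ≤ m * (ε ^ 2 * δ) * (2 ^ n * (m : ℝ) ^ (n - 1) * S ^ 2) := by gcongr
    _ = _ := by rw [hN]; ring

lemma nu_eq_one_of_forall_one_sub_le_goodPr {m : ℕ} {ε δ : ℝ}
    (h : ∀ n : ℕ, 0 < n → ∀ x : Fin n → ℝ, x ≠ 0 → 1 - δ ≤ goodPr n m ε x) : nu m ε δ = 1 :=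
  IsGreatest.csSup_eq ⟨⟨⟨zero_le_one, le_rfl⟩, fun n hn x hx _ ↦ h n hn x hx⟩, fun _ hν ↦ hν.1.2⟩

theorem nu_eq_one_of_large_m :
    ∀ ε δ : ℝ, ε ∈ Set.Ioo (0:ℝ) 1 → δ ∈ Set.Ioo (0:ℝ) 1 → ∀ m : ℕ, 0 < m →
      2 / (ε^2 * δ) ≤ (m:ℝ) →
      nu m ε δ = 1 ∧
        ∀ n : ℕ, 0 < n → ∀ x : Fin n → ℝ, x ≠ 0 → 1 - δ ≤ goodPr n m ε x := by
  intro ε δ hε hδ m _ hm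
  have hgood : ∀ n : ℕ, 0 < n → ∀ x : Fin n → ℝ, x ≠ 0 → 1 - δ ≤ goodPr n m ε x :=
    fun n hn x hx ↦ one_sub_le_goodPr hn hε.1 hδ.1 hm hx
  exact ⟨nu_eq_one_of_forall_one_sub_le_goodPr hgood, hgood⟩

end FH
end
end

section
/- Let n, m, r be positive integers and let S = ⟨(j_p, ℓ_p)⟩_{p∈[r]} be any sequence of r ordered pairs of distinct indices in [n]. If h : [n] → [m] is chosen uniformly at random, then E[ ∏_{p∈[r]} 1[h(j_p) = h(ℓ_p)] ] = m^{−(α(S) − β(S))}. -/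
/-!
The product of the collision indicators is the indicator that `h` is constant along every edge
of `G_S`, i.e. that `h` factors through the connected components of `G_S`. Such `h` correspond
to maps from the components to `[m]`, and there are `β(S) + (n - α(S))` components: the `β(S)`
meeting `V(S)` and one singleton for each isolated vertex. Dividing `m ^ (β + n - α)` by the
`m ^ n` hash functions gives the claim.
-/

open scoped BigOperators Classical
noncomputable section

namespace FH

/-- Expectation over a uniformly random hash function `h : [n] → [m]`. -/
def hE (n m : ℕ) (f : (Fin n → Fin m) → ℝ) : ℝ :=
  (∑ h : Fin n → Fin m, f h) / (Fintype.card (Fin n → Fin m) : ℝ)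

/-- `V(S)`: the set of vertices incident to some edge of `G_S` (equivalently, lying in a
connected component of `G_S` with at least two vertices, as all edges join distinct vertices). -/
def VS (n r : ℕ) (S : Fin r → Fin n × Fin n) : Finset (Fin n) :=
  Finset.univ.filter (fun q : Fin n => ∃ p, q = (S p).1 ∨ q = (S p).2)

/-- The simple graph underlying the multigraph `G_S`. -/
def graphS (n r : ℕ) (S : Fin r → Fin n × Fin n) : SimpleGraph (Fin n) where
  Adj v w := v ≠ w ∧ ∃ p, S p = (v, w) ∨ S p = (w, v)
  symm := by
    constructor
    rintro v w ⟨hvw, p, hp⟩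
    exact ⟨hvw.symm, p, hp.symm⟩
  loopless := by constructor; rintro v ⟨h, -⟩; exact h rfl

/-- `α(S) = |V(S)|`. -/
def alphaS (n r : ℕ) (S : Fin r → Fin n × Fin n) : ℕ := (VS n r S).card

/-- `β(S)`: the number of connected components of `G_S` containing at least two vertices. -/
def betaS (n r : ℕ) (S : Fin r → Fin n × Fin n) : ℕ :=
  ((graphS n r S).connectedComponentMk '' (VS n r S : Set (Fin n))).ncard

end FH

namespace SimpleGraph

variable {V : Type*} {G : SimpleGraph V}

lemma Reachable.apply_eq_of_forall_adj {β : Sort*} {f : V → β}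
    (hf : ∀ ⦃v w⦄, G.Adj v w → f v = f w) {u v : V} (h : G.Reachable u v) : f u = f v := by
  obtain ⟨p⟩ := h
  induction p with
  | nil => rfl
  | cons hadj _ ih => exact (hf hadj).trans ih

variable (G) in
def adjInvariantEquiv (β : Type*) :
    {f : V → β // ∀ ⦃v w⦄, G.Adj v w → f v = f w} ≃ (G.ConnectedComponent → β) where
  toFun f := ConnectedComponent.lift f.1 fun _ _ p _ => p.reachable.apply_eq_of_forall_adj f.2
  invFun g := ⟨g ∘ G.connectedComponentMk,
    fun _ _ h => congrArg g (ConnectedComponent.connectedComponentMk_eq_of_adj h)⟩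
  left_inv _ := rfl
  right_inv _ := funext (ConnectedComponent.ind fun _ => rfl)

lemma card_adjInvariant [Finite V] (β : Type*) :
    Nat.card {f : V → β // ∀ ⦃v w⦄, G.Adj v w → f v = f w} =
      Nat.card β ^ Nat.card G.ConnectedComponent := by
  rw [Nat.card_congr (G.adjInvariantEquiv β), Nat.card_fun]

lemma Reachable.eq_of_notMem {s : Set V} (hs : ∀ ⦃v w⦄, G.Adj v w → v ∈ s) {u v : V}
    (hu : u ∉ s) (h : G.Reachable u v) : u = v := by
  by_contra huv
  obtain ⟨w, hw⟩ := h.nonempty_neighborSet_left huv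
  exact hu (hs hw)

/-- Each vertex outside `s` is isolated, so it forms a component of its own. -/
lemma card_connectedComponent_eq_ncard_image_add [Finite V] {s : Set V}
    (hs : ∀ ⦃v w⦄, G.Adj v w → v ∈ s) :
    Nat.card G.ConnectedComponent = (G.connectedComponentMk '' s).ncard + sᶜ.ncard := by
  have hcover : G.connectedComponentMk '' s ∪ G.connectedComponentMk '' sᶜ = Set.univ := by
    rw [← Set.image_union, Set.union_compl_self, Set.image_univ, Set.range_eq_univ]
    exact Quot.mk_surjective
  have hdisj : Disjoint (G.connectedComponentMk '' s) (G.connectedComponentMk '' sᶜ) := by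
    rw [Set.disjoint_left]
    rintro _ ⟨v, hv, rfl⟩ ⟨w, hw, hwv⟩
    exact hw ((ConnectedComponent.eq.1 hwv).eq_of_notMem hs hw ▸ hv)
  have hinj : Set.InjOn G.connectedComponentMk sᶜ := fun v hv _ _ hvw =>
    (ConnectedComponent.eq.1 hvw).eq_of_notMem hs hv
  rw [← Set.ncard_univ, ← hcover, Set.ncard_union_eq hdisj, hinj.ncard_image]

end SimpleGraph

namespace FH

variable {n m r : ℕ} {S : Fin r → Fin n × Fin n}

lemma mem_VS_of_graphS_adj {v w : Fin n} (h : (graphS n r S).Adj v w) : v ∈ VS n r S := by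
  obtain ⟨-, p, hp | hp⟩ := h <;>
    exact Finset.mem_filter.2 ⟨Finset.mem_univ v, p, by simp [hp]⟩

lemma forall_collision_iff {h : Fin n → Fin m} :
    (∀ p, h (S p).1 = h (S p).2) ↔ ∀ ⦃v w⦄, (graphS n r S).Adj v w → h v = h w := by
  refine ⟨?_, fun hh p => ?_⟩
  · rintro hh v w ⟨-, p, hp | hp⟩
    · simpa [hp] using hh p
    · simpa [hp] using (hh p).symm
  · by_cases hp : (S p).1 = (S p).2
    · rw [hp]
    · exact hh ⟨hp, p, Or.inl rfl⟩

lemma card_connectedComponent_graphS :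
    Nat.card (graphS n r S).ConnectedComponent = betaS n r S + (n - alphaS n r S) := by
  rw [SimpleGraph.card_connectedComponent_eq_ncard_image_add fun _ _ => mem_VS_of_graphS_adj,
    ← Finset.coe_compl, Set.ncard_coe_finset, Finset.card_compl, Fintype.card_fin]
  rfl

lemma sum_prod_collision_indicator :
    ∑ h : Fin n → Fin m, ∏ p, (if h (S p).1 = h (S p).2 then (1 : ℝ) else 0) =
      (m : ℝ) ^ (betaS n r S + (n - alphaS n r S)) := by
  simp only [Fintype.prod_boole, Finset.sum_boole, forall_collision_iff]
  rw [← Fintype.card_subtype, ← Nat.card_eq_fintype_card, SimpleGraph.card_adjInvariant,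
    card_connectedComponent_graphS, Nat.card_eq_fintype_card, Fintype.card_fin]
  push_cast
  rfl

theorem collision_product_expectation :
    ∀ n m r : ℕ, 0 < n → 0 < m →
      ∀ S : Fin r → Fin n × Fin n, (∀ p, (S p).1 ≠ (S p).2) →
        hE n m (fun h => ∏ p : Fin r, (if h (S p).1 = h (S p).2 then (1:ℝ) else 0)) =
          (m:ℝ) ^ ((betaS n r S : ℤ) - (alphaS n r S : ℤ)) := by
  intro n m r _ hm S _
  have hα : alphaS n r S ≤ n := by
    simpa [alphaS] using (VS n r S).card_le_univ
  rw [hE, sum_prod_collision_indicator, Fintype.card_fun, Fintype.card_fin, Fintype.card_fin,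
    ← zpow_natCast, Nat.cast_pow, ← zpow_natCast, ← zpow_sub₀ (by positivity)]
  congr 1
  push_cast [hα]
  ring

end FH
end
end
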